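/- Let f : ℝⁿ → ℝⁿ be continuously differentiable with ‖Df(z)‖ ≤ ℓ (operator norm) for all z ∈ ℝⁿ, and let φ : ℝ × ℝⁿ → ℝⁿ be its complete flow. Then for every s ∈ ℝ the map z ↦ φ(s,z) is differentiable and its derivative satisfies ‖∂φ(s,z)/∂z‖ ≤ e^{ℓ|s|} for all z ∈ ℝⁿ. -/

import Mathlib

open Set Filter Topology Metric MeasureTheory

noncomputable section

/-- A global (forward-complete) solution of the ODE `ẋ = F x` on `[0, ∞)`. -/
def IsGlobalSol {E : Type*} [NormedAddCommGroup E] [NormedSpace ℝ E]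
    (F : E → E) (p : ℝ → E) : Prop :=
  ∀ t : ℝ, 0 ≤ t → HasDerivAt p (F (p t)) t

/-- The compact set `B` is asymptotically stable for `ẋ = F x` with domain of attraction
the open set `D ⊇ B`: (i) uniform stability (solutions starting close to `B` exist globally
and stay close), (ii) every solution starting in `D` exists globally and converges to `B`. -/
def IsAsympStable {E : Type*} [NormedAddCommGroup E] [NormedSpace ℝ E]
    (F : E → E) (B D : Set E) : Prop :=
  IsCompact B ∧ IsOpen D ∧ B ⊆ D ∧
  (∀ ε > (0:ℝ), ∃ δ > (0:ℝ),
    (∀ x₀ : E, infDist x₀ B ≤ δ → ∃ p : ℝ → E, IsGlobalSol F p ∧ p 0 = x₀) ∧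
    ∀ p : ℝ → E, IsGlobalSol F p → infDist (p 0) B ≤ δ →
      ∀ t : ℝ, 0 ≤ t → infDist (p t) B ≤ ε) ∧
  (∀ x₀ ∈ D, ∃ p : ℝ → E, IsGlobalSol F p ∧ p 0 = x₀) ∧
  ∀ p : ℝ → E, IsGlobalSol F p → p 0 ∈ D →
    Tendsto (fun t => infDist (p t) B) atTop (nhds 0)

/-- The compact set `B` is in addition locally exponentially stable for `ẋ = F x`. -/
def IsLocExpStable {E : Type*} [NormedAddCommGroup E] [NormedSpace ℝ E]
    (F : E → E) (B : Set E) : Prop :=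
  ∃ M : ℝ, 1 ≤ M ∧ ∃ lam > (0:ℝ), ∃ c₀ > (0:ℝ),
    ∀ p : ℝ → E, IsGlobalSol F p → infDist (p 0) B ≤ c₀ →
      ∀ t : ℝ, 0 ≤ t → infDist (p t) B ≤ M * Real.exp (-lam * t) * infDist (p 0) B

/-- A class-`K` function `[0,∞) → [0,∞)`: continuous, strictly increasing, vanishing at `0`. -/
def IsClassK (ρ : ℝ → ℝ) : Prop :=
  ContinuousOn ρ (Ici 0) ∧ StrictMonoOn ρ (Ici 0) ∧ ρ 0 = 0

/-- A class-`K∞` function. -/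
def IsClassKInf (ρ : ℝ → ℝ) : Prop :=
  IsClassK ρ ∧ Tendsto ρ atTop atTop

/-- A class-`KL` function. -/
def IsClassKL (β : ℝ → ℝ → ℝ) : Prop :=
  (∀ t : ℝ, 0 ≤ t → IsClassK fun s => β s t) ∧
  ∀ s : ℝ, 0 ≤ s → AntitoneOn (fun t => β s t) (Ici 0) ∧
    Tendsto (fun t => β s t) atTop (nhds 0)

/-- `F` is Hurwitz: `‖exp (t F)‖ ≤ c e^{-λ t}` for all `t ≥ 0`, for some `c ≥ 1`, `λ > 0`. -/
def IsHurwitz {m : ℕ} (F : Matrix (Fin m) (Fin m) ℝ) : Prop :=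
  ∃ c : ℝ, 1 ≤ c ∧ ∃ lam > (0:ℝ), ∀ t : ℝ, 0 ≤ t →
    ∀ x : Fin m → ℝ, ‖(NormedSpace.exp (t • F)).mulVec x‖ ≤ c * Real.exp (-lam * t) * ‖x‖

/-- `(F, G)` is a controllable pair: `G, FG, …, F^{m-1}G` span `ℝ^m`. -/
def IsControllablePair {m : ℕ} (F : Matrix (Fin m) (Fin m) ℝ) (G : Fin m → ℝ) : Prop :=
  Submodule.span ℝ (Set.range fun i : Fin m => (F ^ (i : ℕ)).mulVec G) = ⊤

open Classical in
/-- The weighted distance `|p|_{B/D} = (1 + 1/dist(p, ∂ cl D)) · dist(p, B)`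
(with the convention `|p|_{B/D} = dist(p,B)` when `D` is the whole space). -/
def relDist {E : Type*} [NormedAddCommGroup E] (B D : Set E) (p : E) : ℝ :=
  if D = univ then infDist p B
  else (1 + 1 / infDist p (frontier (closure D))) * infDist p B

/-!
The derivative of `z ↦ φ s z` is the solution `W` of the variational equation
`W' = Df(φ t z) ∘ W`, `W 0 = 1`. The remainder `φ t (z + h) - φ t z - W t h` obeys a linear
differential inequality whose inhomogeneity is `o(‖h‖)` uniformly along the compact trajectory
(uniform continuity of `Df` near it), so Grönwall makes the remainder `o(‖h‖)`. Picard–Lindelöf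
only provides `W` on time intervals of length `1 / (2ℓ)`; longer times follow from the group law
`φ (s + t) = φ t ∘ φ s`, negative times from the time-reversed flow of `-f`. The bound on the
derivative is the Lipschitz constant `e^{ℓ|s|}` of `φ s`, again by Grönwall.
-/

open scoped NNReal

section FlowDifferentiability

variable {E F : Type*} [NormedAddCommGroup E] [NormedSpace ℝ E]
  [NormedAddCommGroup F] [NormedSpace ℝ F]

theorem gronwallBound_δ0 (K ε x : ℝ) :
    gronwallBound 0 K ε x = ε * gronwallBound 0 K 1 x := by
  unfold gronwallBound
  split_ifs <;> ring

theorem lipschitzWith_of_norm_fderiv_le {f : E → F} {K : ℝ≥0} (hf : ContDiff ℝ 1 f)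
    (hfK : ∀ x, ‖fderiv ℝ f x‖ ≤ K) : LipschitzWith K f :=
  lipschitzWith_of_nnnorm_fderiv_le (hf.differentiable one_ne_zero) fun x => hfK x

theorem IsCompact.exists_pos_forall_norm_image_sub_sub_fderiv_le {S : Set E} (hS : IsCompact S)
    {f : E → F} (hf : ContDiff ℝ 1 f) {δ : ℝ} (hδ : 0 < δ) :
    ∃ ρ > 0, ∀ x ∈ S, ∀ y, ‖y - x‖ < ρ → ‖f y - f x - fderiv ℝ f x (y - x)‖ ≤ δ * ‖y - x‖ := by
  obtain ⟨ρ, hρ, hclose⟩ := Metric.mem_uniformity_dist.1 <|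
    hS.uniformContinuousAt_of_continuousAt (fderiv ℝ f)
      (fun x _ => (hf.continuous_fderiv one_ne_zero).continuousAt) (dist_mem_uniformity hδ)
  refine ⟨ρ, hρ, fun x hx y hy => ?_⟩
  refine (convex_ball x ρ).norm_image_sub_le_of_norm_fderiv_le'
    (fun w _ => hf.differentiable one_ne_zero w) (fun w hw => ?_) (mem_ball_self hρ)
    (by rwa [mem_ball, dist_eq_norm])
  rw [← dist_eq_norm, dist_comm]
  exact (hclose (by rwa [dist_comm]) hx).le

theorem exists_hasDerivWithinAt_comp [CompleteSpace E] {A : ℝ → E →L[ℝ] E} {K : ℝ≥0} {T : ℝ}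
    (hT : 0 ≤ T) (hKT : 2 * K * T ≤ 1) (hA : ContinuousOn A (Icc 0 T))
    (hAK : ∀ t ∈ Icc 0 T, ‖A t‖ ≤ K) :
    ∃ W : ℝ → E →L[ℝ] E, W 0 = 1 ∧
      ∀ t ∈ Icc 0 T, HasDerivWithinAt W ((A t).comp (W t)) (Icc 0 T) t := by
  have hPL : IsPicardLindelof (fun t (W : E →L[ℝ] E) => (A t).comp W) (tmin := 0) (tmax := T)
      ⟨0, left_mem_Icc.2 hT⟩ (1 : E →L[ℝ] E) 1 0 (2 * K) K := by
    -- on the unit ball about `1`, the field `W ↦ A t ∘ W` is `K`-Lipschitz and bounded by `2K`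
    refine ⟨fun t ht => ?_, fun W _ => hA.clm_comp continuousOn_const, fun t ht W hW => ?_, ?_⟩
    · refine (LipschitzWith.of_dist_le_mul fun W₁ W₂ => ?_).lipschitzOnWith
      rw [dist_eq_norm, dist_eq_norm, ← ContinuousLinearMap.comp_sub]
      exact ((A t).opNorm_comp_le _).trans (by gcongr; exact hAK t ht)
    · have hW2 : ‖W‖ ≤ 2 := by
        have h1 : ‖W - 1‖ ≤ 1 := by simpa using mem_closedBall_iff_norm.1 hW
        have h2 : ‖(1 : E →L[ℝ] E)‖ ≤ 1 := ContinuousLinearMap.norm_id_le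
        linarith [norm_le_norm_add_norm_sub' W 1]
      calc ‖(A t).comp W‖ ≤ ‖A t‖ * ‖W‖ := (A t).opNorm_comp_le W
        _ ≤ K * 2 := by gcongr; exact hAK t ht
        _ = ↑(2 * K) := by push_cast; ring
    · simpa [hT, mul_comm] using hKT
  exact hPL.exists_eq_forall_mem_Icc_hasDerivWithinAt₀

structure IsFlow (f : E → E) (φ : ℝ → E → E) : Prop where
  apply_zero : ∀ z, φ 0 z = z
  hasDerivAt : ∀ s z, HasDerivAt (fun t => φ t z) (f (φ s z)) s

namespace IsFlow

variable {f : E → E} {φ : ℝ → E → E} {K : ℝ≥0}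

theorem continuous_apply (hφ : IsFlow f φ) (z : E) : Continuous fun t => φ t z :=
  continuous_iff_continuousAt.2 fun t => (hφ.hasDerivAt t z).continuousAt

theorem neg (hφ : IsFlow f φ) : IsFlow (-f) fun t => φ (-t) where
  apply_zero z := by simpa using hφ.apply_zero z
  hasDerivAt s z := by
    simpa [Function.comp_def] using (hφ.hasDerivAt (-s) z).scomp s (hasDerivAt_neg s)

theorem apply_add (hφ : IsFlow f φ) (hf : LipschitzWith K f) (s t : ℝ) (z : E) :
    φ (s + t) z = φ t (φ s z) := by
  have hshift : ∀ τ, HasDerivAt (fun τ => φ (s + τ) z) (f (φ (s + τ) z)) τ := fun τ => by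
    simpa [Function.comp_def] using
      (hφ.hasDerivAt (s + τ) z).scomp τ ((hasDerivAt_id τ).const_add s)
  have := ODE_solution_unique_univ (v := fun _ => f) (s := fun _ => univ) (t₀ := 0)
    (fun _ => hf.lipschitzOnWith) (fun τ => ⟨hshift τ, trivial⟩)
    (fun τ => ⟨hφ.hasDerivAt τ (φ s z), trivial⟩) (by simp [hφ.apply_zero])
  exact congrFun this t

theorem dist_le (hφ : IsFlow f φ) (hf : LipschitzWith K f) {s : ℝ} (hs : 0 ≤ s) (x y : E) :
    dist (φ s x) (φ s y) ≤ dist x y * Real.exp (K * s) := by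
  simpa using dist_le_of_trajectories_ODE (v := fun _ => f) (fun _ => hf)
    (hφ.continuous_apply x).continuousOn (fun t _ => (hφ.hasDerivAt t x).hasDerivWithinAt)
    (hφ.continuous_apply y).continuousOn (fun t _ => (hφ.hasDerivAt t y).hasDerivWithinAt)
    (by rw [hφ.apply_zero, hφ.apply_zero]) s (right_mem_Icc.2 hs)

theorem dist_le_abs (hφ : IsFlow f φ) (hf : LipschitzWith K f) (s : ℝ) (x y : E) :
    dist (φ s x) (φ s y) ≤ dist x y * Real.exp (K * |s|) := by
  rcases le_total 0 s with hs | hs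
  · simpa [abs_of_nonneg hs] using hφ.dist_le hf hs x y
  · simpa [abs_of_nonpos hs] using hφ.neg.dist_le hf.neg (neg_nonneg.2 hs) x y

theorem norm_sub_sub_le_gronwallBound (hφ : IsFlow f φ) {A W : ℝ → E →L[ℝ] E}
    (hAK : ∀ t, ‖A t‖ ≤ K) {s : ℝ} (hs : 0 ≤ s) (hW0 : W 0 = 1)
    (hW : ∀ t ∈ Icc 0 s, HasDerivWithinAt W ((A t).comp (W t)) (Icc 0 s) t) {x y : E} {ε : ℝ}
    (hlin : ∀ t ∈ Icc 0 s, ‖f (φ t y) - f (φ t x) - A t (φ t y - φ t x)‖ ≤ ε) :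
    ‖φ s y - φ s x - W s (y - x)‖ ≤ gronwallBound 0 K ε s := by
  set g : ℝ → E := fun t => φ t y - φ t x - W t (y - x)
  have hWc : ContinuousOn W (Icc 0 s) := fun t ht => (hW t ht).continuousWithinAt
  have hg : ∀ t ∈ Ico 0 s, HasDerivWithinAt g
      (f (φ t y) - f (φ t x) - (A t).comp (W t) (y - x)) (Ici t) t := fun t ht => by
    have hWt := ((hW t (Ico_subset_Icc_self ht)).mono_of_mem_nhdsWithin
      (Icc_mem_nhdsGE_of_mem ht)).clm_apply (hasDerivWithinAt_const _ _ (y - x))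
    rw [map_zero, add_zero] at hWt
    exact ((hφ.hasDerivAt t y).sub (hφ.hasDerivAt t x)).hasDerivWithinAt.sub hWt
  have hg' : ∀ t ∈ Ico 0 s,
      ‖f (φ t y) - f (φ t x) - (A t).comp (W t) (y - x)‖ ≤ K * ‖g t‖ + ε := fun t ht => by
    calc _ = ‖(f (φ t y) - f (φ t x) - A t (φ t y - φ t x)) + A t (g t)‖ := by
          simp only [g, ContinuousLinearMap.comp_apply, map_sub]; abel_nf
      _ ≤ ε + K * ‖g t‖ :=
          norm_add_le_of_le (hlin t (Ico_subset_Icc_self ht)) ((A t).le_of_opNorm_le (hAK t) _)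
      _ = K * ‖g t‖ + ε := add_comm _ _
  simpa [g] using norm_le_gronwallBound_of_norm_deriv_right_le
    (((hφ.continuous_apply y).sub (hφ.continuous_apply x)).continuousOn.sub
      (hWc.clm_apply continuousOn_const)) hg (by simp [hφ.apply_zero, hW0]) hg'
    s (right_mem_Icc.2 hs)

theorem hasFDerivAt_of_hasDerivWithinAt_comp (hφ : IsFlow f φ) (hf : ContDiff ℝ 1 f)
    (hfK : ∀ x, ‖fderiv ℝ f x‖ ≤ K) {z : E} {s : ℝ} (hs : 0 ≤ s) {W : ℝ → E →L[ℝ] E}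
    (hW0 : W 0 = 1)
    (hW : ∀ t ∈ Icc 0 s, HasDerivWithinAt W ((fderiv ℝ f (φ t z)).comp (W t)) (Icc 0 s) t) :
    HasFDerivAt (φ s) (W s) z := by
  -- if `Df` is `δ`-close to `Df (φ t z)` along the nearby trajectory, the remainder is `≤ δ C ‖h‖`
  set C := Real.exp (K * s) * gronwallBound 0 K 1 s
  have hC : 0 ≤ C := mul_nonneg (Real.exp_pos _).le <| by
    simpa [gronwallBound_x0] using gronwallBound_mono le_rfl zero_le_one K.2 hs
  rw [hasFDerivAt_iff_isLittleO_nhds_zero, Asymptotics.isLittleO_iff]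
  intro c hc
  obtain ⟨ρ, hρ, hlin⟩ := (isCompact_Icc.image (hφ.continuous_apply z)
    ).exists_pos_forall_norm_image_sub_sub_fderiv_le hf (δ := c / (C + 1)) (by positivity)
  filter_upwards [ball_mem_nhds (0 : E) (show 0 < ρ / Real.exp (K * s) by positivity)] with h hh
  have hnear : ∀ t ∈ Icc 0 s, ‖φ t (z + h) - φ t z‖ ≤ Real.exp (K * s) * ‖h‖ := fun t ht => by
    rw [← dist_eq_norm]
    calc _ ≤ dist (z + h) z * Real.exp (K * t) :=
          hφ.dist_le (lipschitzWith_of_norm_fderiv_le hf hfK) ht.1 _ _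
      _ ≤ _ := by rw [dist_eq_norm, add_sub_cancel_left, mul_comm]; gcongr; exact ht.2
  have hρh : Real.exp (K * s) * ‖h‖ < ρ := by
    rwa [mem_ball_zero_iff, lt_div_iff₀ (Real.exp_pos _), mul_comm] at hh
  have hrem := hφ.norm_sub_sub_le_gronwallBound (fun t => hfK _) hs hW0 hW
    (ε := c / (C + 1) * (Real.exp (K * s) * ‖h‖)) fun t ht =>
      (hlin _ ⟨t, ht, rfl⟩ _ ((hnear t ht).trans_lt hρh)).trans (by gcongr; exact hnear t ht)
  rw [add_sub_cancel_left, gronwallBound_δ0] at hrem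
  calc _ ≤ c / (C + 1) * (Real.exp (K * s) * ‖h‖) * gronwallBound 0 K 1 s := hrem
    _ = c * ‖h‖ * (C / (C + 1)) := by ring
    _ ≤ c * ‖h‖ :=
      mul_le_of_le_one_right (by positivity) ((div_le_one (by positivity)).2 (by linarith))

theorem differentiable_of_two_mul_mul_le [CompleteSpace E] (hφ : IsFlow f φ)
    (hf : ContDiff ℝ 1 f) (hfK : ∀ x, ‖fderiv ℝ f x‖ ≤ K) {s : ℝ} (hs : 0 ≤ s)
    (hKs : 2 * K * s ≤ 1) : Differentiable ℝ (φ s) := fun z => by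
  obtain ⟨W, hW0, hW⟩ := exists_hasDerivWithinAt_comp hs hKs
    ((hf.continuous_fderiv one_ne_zero).comp (hφ.continuous_apply z)).continuousOn
    fun t _ => hfK _
  exact (hφ.hasFDerivAt_of_hasDerivWithinAt_comp hf hfK hs hW0 hW).differentiableAt

theorem differentiable_of_two_mul_mul_abs_le [CompleteSpace E] (hφ : IsFlow f φ)
    (hf : ContDiff ℝ 1 f) (hfK : ∀ x, ‖fderiv ℝ f x‖ ≤ K) {s : ℝ} (hKs : 2 * K * |s| ≤ 1) :
    Differentiable ℝ (φ s) := by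
  rcases le_total 0 s with hs | hs
  · exact hφ.differentiable_of_two_mul_mul_le hf hfK hs (by rwa [abs_of_nonneg hs] at hKs)
  · have hfK' : ∀ x, ‖fderiv ℝ (-f) x‖ ≤ K := fun x => by
      rw [fderiv_neg, norm_neg]
      exact hfK x
    simpa using hφ.neg.differentiable_of_two_mul_mul_le hf.neg hfK' (neg_nonneg.2 hs)
      (by rwa [abs_of_nonpos hs] at hKs)

theorem differentiable_nat_mul (hφ : IsFlow f φ) (hf : LipschitzWith K f) {t : ℝ}
    (ht : Differentiable ℝ (φ t)) (n : ℕ) : Differentiable ℝ (φ (n * t)) := by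
  induction n with
  | zero =>
    rw [Nat.cast_zero, zero_mul, funext hφ.apply_zero]
    exact differentiable_id
  | succ n ih =>
    have hsplit : φ ((n + 1 : ℕ) * t) = φ t ∘ φ (n * t) := funext fun z => by
      rw [Nat.cast_succ, add_one_mul, hφ.apply_add hf]
      rfl
    rw [hsplit]
    exact ht.comp ih

theorem differentiable [CompleteSpace E] (hφ : IsFlow f φ) (hf : ContDiff ℝ 1 f)
    (hfK : ∀ x, ‖fderiv ℝ f x‖ ≤ K) (s : ℝ) : Differentiable ℝ (φ s) := by
  obtain ⟨n, hn⟩ := exists_nat_ge (2 * K * |s|)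
  have hn1 : (0 : ℝ) < n + 1 := by positivity
  have hsmall : 2 * K * |s / (n + 1)| ≤ 1 := by
    rw [abs_div, abs_of_pos hn1, ← mul_div_assoc, div_le_one hn1]
    linarith
  have := hφ.differentiable_nat_mul (lipschitzWith_of_norm_fderiv_le hf hfK)
    (hφ.differentiable_of_two_mul_mul_abs_le hf hfK hsmall) (n + 1)
  rwa [Nat.cast_succ, mul_div_cancel₀ _ hn1.ne'] at this

end IsFlow

end FlowDifferentiability

/-- a flow of a globally Lipschitz (bounded-derivative) `C¹` vector field is
differentiable in the initial condition with `‖∂φ(s,z)/∂z‖ ≤ e^{ℓ|s|}`. -/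
theorem statement_13
    (n : ℕ) (f : (Fin n → ℝ) → (Fin n → ℝ)) (l : ℝ)
    (hf : ContDiff ℝ 1 f)
    (hfd : ∀ z, ‖fderiv ℝ f z‖ ≤ l)
    (φ : ℝ → (Fin n → ℝ) → (Fin n → ℝ))
    (hφ0 : ∀ z, φ 0 z = z)
    (hφ : ∀ s z, HasDerivAt (fun t => φ t z) (f (φ s z)) s) :
    ∀ s : ℝ, Differentiable ℝ (φ s) ∧
      ∀ z, ‖fderiv ℝ (φ s) z‖ ≤ Real.exp (l * |s|) := by
  lift l to ℝ≥0 using (norm_nonneg _).trans (hfd 0)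
  have hflow : IsFlow f φ := ⟨hφ0, hφ⟩
  intro s
  refine ⟨hflow.differentiable hf hfd s, fun z => norm_fderiv_le_of_lip' ℝ (by positivity) ?_⟩
  filter_upwards with y
  simpa [dist_eq_norm, mul_comm] using
    hflow.dist_le_abs (lipschitzWith_of_norm_fderiv_le hf hfd) s y z
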